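/- Let G be a graph on n ≥ 2 vertices with a universal vertex u. Then π_t(G, u) = n + 2t − 2, i.e., every configuration of size n + 2t − 2 on G is t-fold u-solvable, and some configuration of size n + 2t − 3 is not. -/

import Mathlib

open SimpleGraph

open Classical in
/-- A single pebbling step: remove two pebbles from `u` and add one to an adjacent `v`. -/
def PebStep {V : Type*} (G : SimpleGraph V) (C C' : V → ℕ) : Prop :=
  ∃ u v, G.Adj u v ∧ 2 ≤ C u ∧
    ∀ w, C' w = if w = u then C w - 2 else if w = v then C w + 1 else C w

/-- `C` is `t`-fold `r`-solvable: some sequence of pebbling steps places `t` pebbles on `r`. -/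
def Solvable {V : Type*} (G : SimpleGraph V) (C : V → ℕ) (r : V) (t : ℕ) : Prop :=
  ∃ C', Relation.ReflTransGen (PebStep G) C C' ∧ t ≤ C' r

/-- The size of a configuration: total number of pebbles. -/
def confSize {V : Type*} [Fintype V] (C : V → ℕ) : ℕ := ∑ v, C v

/-- The potential of a configuration: the number of pairwise disjoint pairs of
pebbles sitting on common vertices, `∑ v, ⌊C v / 2⌋`. -/
def potential {V : Type*} [Fintype V] (C : V → ℕ) : ℕ := ∑ v, C v / 2

/-- Number of vertices with no pebbles. -/
noncomputable def numZeros {V : Type*} [Fintype V] (C : V → ℕ) : ℕ :=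
  {v : V | C v = 0}.ncard

/-- The `t`-pebbling number of `G` with root `r`. -/
noncomputable def piT {V : Type*} [Fintype V] (G : SimpleGraph V) (r : V) (t : ℕ) : ℕ :=
  sInf {m | ∀ C : V → ℕ, m ≤ confSize C → Solvable G C r t}

/-- The `t`-pebbling number of `G`. -/
noncomputable def piTG {V : Type*} [Fintype V] (G : SimpleGraph V) (t : ℕ) : ℕ :=
  Finset.univ.sup fun r => piT G r t

/-- `G` is `k`-connected: more than `k` vertices and deleting fewer than `k`
vertices leaves a connected graph. -/
def KConnected {V : Type*} [Fintype V] (G : SimpleGraph V) (k : ℕ) : Prop :=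
  k < Fintype.card V ∧
    ∀ S : Set V, S.ncard < k → ((⊤ : G.Subgraph).deleteVerts S).coe.Connected

/-- `u` is a universal vertex: adjacent to every other vertex. -/
def IsUniversal {V : Type*} (G : SimpleGraph V) (u : V) : Prop :=
  ∀ v, v ≠ u → G.Adj u v


/-!
Weigh a configuration by `C u + ∑_{v ≠ u} ⌊C v / 2⌋`. A pebbling step never increases this
weight, and every configuration `C` with `t ≤ C u` has weight at least `t`, so weight `t` is
necessary for `t`-fold `u`-solvability. When `u` is universal it is also sufficient: a pair of
pebbles on any other vertex moves to `u` in one step without changing the weight. A configuration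
of size `n + 2t - 2` has weight at least `t`, whereas `2t - 1` pebbles on one vertex `v ≠ u` and one
pebble on each of the remaining `n - 2` non-root vertices give size `n + 2t - 3` and weight `t - 1`.
-/

open Finset

section RootWeight

open Classical

variable {V : Type*} [Fintype V] {G : SimpleGraph V} {u : V}

lemma sum_add_le_sum_add_of_forall_le {f g : V → ℕ} {a b : V} {k m : ℕ}
    (h : ∀ w, f w + (if w = a then k else 0) ≤ g w + (if w = b then m else 0)) :
    ∑ w, f w + k ≤ ∑ w, g w + m := by
  simpa [sum_add_distrib] using sum_le_sum (s := univ) fun w _ => h w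

lemma sum_add_eq_sum_add_of_forall_eq {f g : V → ℕ} {a b : V} {k m : ℕ}
    (h : ∀ w, f w + (if w = a then k else 0) = g w + (if w = b then m else 0)) :
    ∑ w, f w + k = ∑ w, g w + m := by
  simpa [sum_add_distrib] using sum_congr (s₁ := univ) rfl fun w _ => h w

lemma confSize_add_one_of_pebStep {C C' : V → ℕ} (h : PebStep G C C') :
    confSize C' + 1 = confSize C := by
  obtain ⟨a, b, hab, ha, hC'⟩ := h
  have hne := G.ne_of_adj hab
  have := sum_add_eq_sum_add_of_forall_eq (f := C') (g := C) (a := a) (b := b) (k := 2) (m := 1)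
    fun w => by rw [hC' w]; split_ifs <;> subst_vars <;> first | omega | contradiction
  unfold confSize
  omega

noncomputable def rootWeight (u : V) (C : V → ℕ) : ℕ :=
  ∑ v, if v = u then C v else C v / 2

lemma le_rootWeight (u : V) (C : V → ℕ) : C u ≤ rootWeight u C :=
  (if_pos rfl).symm.le.trans (single_le_sum (f := fun v => if v = u then C v else C v / 2)
    (fun _ _ => Nat.zero_le _) (mem_univ u))

lemma rootWeight_le_of_pebStep {C C' : V → ℕ} (h : PebStep G C C') :
    rootWeight u C' ≤ rootWeight u C := by
  obtain ⟨a, b, hab, ha, hC'⟩ := h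
  have hne := G.ne_of_adj hab
  have := sum_add_le_sum_add_of_forall_le
    (f := fun w => if w = u then C' w else C' w / 2) (g := fun w => if w = u then C w else C w / 2)
    (a := a) (b := b) (k := 1) (m := 1) fun w => by
      simp only [hC' w]; split_ifs <;> subst_vars <;> omega
  unfold rootWeight
  omega

lemma rootWeight_le_of_reflTransGen {C C' : V → ℕ}
    (h : Relation.ReflTransGen (PebStep G) C C') : rootWeight u C' ≤ rootWeight u C := by
  induction h with
  | refl => exact le_rfl
  | tail _ hstep ih => exact (rootWeight_le_of_pebStep hstep).trans ih

lemma not_solvable_of_rootWeight_lt {C : V → ℕ} {t : ℕ} (h : rootWeight u C < t) :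
    ¬ Solvable G C u t := by
  rintro ⟨C', hC', ht⟩
  have := le_rootWeight u C'
  have := rootWeight_le_of_reflTransGen (u := u) hC'
  omega

lemma rootWeight_eq_of_forall_lt_two {C : V → ℕ} (h : ∀ v, v ≠ u → C v < 2) :
    rootWeight u C = C u := by
  rw [rootWeight, ← Fintype.sum_ite_eq' u C]
  refine sum_congr rfl fun v _ => ?_
  split_ifs with hv
  · rfl
  · exact Nat.div_eq_of_lt (h v hv)

lemma solvable_of_le_rootWeight (hu : _root_.IsUniversal G u) {t : ℕ} (C : V → ℕ)
    (h : t ≤ rootWeight u C) : Solvable G C u t := by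
  by_cases hCu : t ≤ C u
  · exact ⟨C, .refl, hCu⟩
  obtain ⟨v, hvu, hv⟩ : ∃ v, v ≠ u ∧ 2 ≤ C v := by
    by_contra! hC
    exact hCu (rootWeight_eq_of_forall_lt_two hC ▸ h)
  set C' : V → ℕ := fun w => if w = v then C w - 2 else if w = u then C w + 1 else C w
  have hstep : PebStep G C C' := ⟨v, u, (hu v hvu).symm, hv, fun _ => rfl⟩
  have hweight : rootWeight u C' = rootWeight u C := by
    have := sum_add_eq_sum_add_of_forall_eq
      (f := fun w => if w = u then C' w else C' w / 2) (g := fun w => if w = u then C w else C w / 2)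
      (a := v) (b := u) (k := 1) (m := 1) fun w => by
        simp only [C']; split_ifs <;> subst_vars <;> first | omega | contradiction
    unfold rootWeight
    omega
  have hsize := confSize_add_one_of_pebStep hstep
  obtain ⟨C'', hC'', ht⟩ := solvable_of_le_rootWeight hu C' (hweight ▸ h)
  exact ⟨C'', .head hstep hC'', ht⟩
termination_by confSize C
decreasing_by exact Nat.lt_of_succ_le hsize.le

lemma confSize_add_one_le_two_mul_rootWeight_add_card (u : V) (C : V → ℕ) :
    confSize C + 1 ≤ 2 * rootWeight u C + Fintype.card V := by
  have := sum_add_le_sum_add_of_forall_le (f := C)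
    (g := fun w => 2 * (if w = u then C w else C w / 2) + 1) (a := u) (b := u) (k := 1) (m := 0)
    fun w => by split_ifs <;> omega
  rw [confSize, rootWeight, mul_sum]
  simpa [sum_add_distrib] using this

lemma solvable_of_card_add_le_confSize (hu : _root_.IsUniversal G u) {t : ℕ} {C : V → ℕ}
    (h : Fintype.card V + 2 * t - 2 ≤ confSize C) : Solvable G C u t := by
  have := confSize_add_one_le_two_mul_rootWeight_add_card u C
  exact solvable_of_le_rootWeight hu C (by omega)

lemma exists_not_solvable (G : SimpleGraph V) (u : V) {t : ℕ} (ht : 1 ≤ t)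
    (hn : 2 ≤ Fintype.card V) :
    ∃ C : V → ℕ, confSize C = Fintype.card V + 2 * t - 3 ∧ ¬ Solvable G C u t := by
  obtain ⟨v, hvu⟩ := Fintype.exists_ne_of_one_lt_card hn u
  set C : V → ℕ := fun w => if w = u then 0 else if w = v then 2 * t - 1 else 1
  have hsize := sum_add_eq_sum_add_of_forall_eq (f := C) (g := fun _ => 1)
    (a := u) (b := v) (k := 1) (m := 2 * t - 2) fun w => by
      simp only [C]; split_ifs <;> subst_vars <;> first | omega | contradiction
  have hweight : rootWeight u C = t - 1 := by
    rw [rootWeight, ← Fintype.sum_ite_eq' v fun _ => t - 1]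
    refine sum_congr rfl fun w _ => ?_
    simp only [C]
    split_ifs <;> subst_vars <;> first | omega | contradiction
  refine ⟨C, ?_, not_solvable_of_rootWeight_lt (by omega)⟩
  simp only [sum_const, card_univ, smul_eq_mul, mul_one] at hsize
  unfold confSize
  omega

end RootWeight

lemma piT_eq_of_solvable_of_not_solvable {V : Type*} [Fintype V] {G : SimpleGraph V} {r : V}
    {t m : ℕ} (hsolv : ∀ C : V → ℕ, m ≤ confSize C → Solvable G C r t) {C₀ : V → ℕ}
    (hC₀ : confSize C₀ + 1 = m) (hns : ¬ Solvable G C₀ r t) : piT G r t = m := by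
  refine le_antisymm (Nat.sInf_le hsolv) (le_csInf ⟨m, hsolv⟩ fun k hk => ?_)
  by_contra! hkm
  exact hns (hk C₀ (by omega))

theorem piT_universal_root {V : Type*} [Fintype V] (G : SimpleGraph V)
    (u : V) (hu : _root_.IsUniversal G u) (t : ℕ) (ht : 1 ≤ t)
    (hn : 2 ≤ Fintype.card V) :
    (∀ C : V → ℕ, confSize C = Fintype.card V + 2 * t - 2 → Solvable G C u t) ∧
    (∃ C : V → ℕ, confSize C = Fintype.card V + 2 * t - 3 ∧ ¬ Solvable G C u t) ∧
    piT G u t = Fintype.card V + 2 * t - 2 := by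
  obtain ⟨C₀, hsize, hns⟩ := exists_not_solvable G u ht hn
  have hsolv : ∀ C : V → ℕ, Fintype.card V + 2 * t - 2 ≤ confSize C → Solvable G C u t :=
    fun _ h => solvable_of_card_add_le_confSize hu h
  exact ⟨fun C h => hsolv C h.ge, ⟨C₀, hsize, hns⟩,
    piT_eq_of_solvable_of_not_solvable hsolv (by omega) hns⟩
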